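/- Let M be a MAGNN with L layers, D_a a dataset, a ∈ con(D_a), and A a unary predicate with A(a) ∈ T_M(D_a). Then the rule r : C_L^a ⊑ A, where the body concept C_L^a is constructed from D_a, is sound for M, and A(a) ∈ T_r(D_a). -/

import Mathlib

open scoped BigOperators

namespace KG

/-- A fact over a signature with `δ` unary predicates (indexed by `Fin δ`) and
binary predicates indexed by `Col`; constants are natural numbers. -/
inductive Fact (δ : ℕ) (Col : Type) where
  | unary : Fin δ → ℕ → Fact δ Col
  | binary : Col → ℕ → ℕ → Fact δ Col
deriving DecidableEq

/-- A dataset is a finite set of facts. -/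
abbrev Dataset (δ : ℕ) (Col : Type) [DecidableEq Col] := Finset (Fact δ Col)

variable {δ : ℕ} {Col : Type} [DecidableEq Col] [Fintype Col]

/-- The (finite) set of constants occurring in a dataset. -/
def conD (D : Dataset δ Col) : Finset ℕ :=
  D.biUnion fun f =>
    match f with
    | .unary _ a => {a}
    | .binary _ a b => {a, b}

/-- The `P`-successors of `a` in `D`. -/
def nbrs (D : Dataset δ Col) (P : Col) (a : ℕ) : Finset ℕ :=
  (conD D).filter fun d => Fact.binary P a d ∈ D

/-- A mean-aggregation GNN with `L ≥ 1` layers, over the signature with `δ` unary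
predicates and binary predicates `Col`.  `dims ℓ` is the dimension of the layer-`ℓ`
vectors, with `dims 0 = dims L = δ`; `A ℓ` and `B P ℓ` are the matrices and `bias ℓ`
the bias vector used to compute the layer-`(ℓ+1)` vectors; `act ℓ` is the
(monotonically increasing, continuous, non-negatively valued) activation function
applied there, and `t` is the classification threshold. -/
structure GNN (δ : ℕ) (Col : Type) where
  L : ℕ
  hL : 1 ≤ L
  dims : ℕ → ℕ
  dims0 : dims 0 = δ
  dimsL : dims L = δ
  A : (ℓ : ℕ) → Matrix (Fin (dims (ℓ + 1))) (Fin (dims ℓ)) ℝ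
  B : Col → (ℓ : ℕ) → Matrix (Fin (dims (ℓ + 1))) (Fin (dims ℓ)) ℝ
  bias : (ℓ : ℕ) → Fin (dims (ℓ + 1)) → ℝ
  act : ℕ → ℝ → ℝ
  act_mono : ∀ ℓ, Monotone (act ℓ)
  act_cont : ∀ ℓ, Continuous (act ℓ)
  act_nonneg : ∀ ℓ x, 0 ≤ act ℓ x
  t : ℝ

/-- The layer-`ℓ` vector that the GNN `M` assigns to the constant `a` on input
dataset `D`.  The mean of an empty family is the zero vector (`0 / 0 = 0` in `ℝ`). -/
noncomputable def GNN.val (M : GNN δ Col) (D : Dataset δ Col) :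
    (ℓ : ℕ) → ℕ → Fin (M.dims ℓ) → ℝ
  | 0, a, i => if Fact.unary (Fin.cast M.dims0 i) a ∈ D then (1 : ℝ) else 0
  | ℓ + 1, a, i =>
      M.act ℓ (M.bias ℓ i
        + (M.A ℓ).mulVec (fun j => M.val D ℓ a j) i
        + ∑ P : Col, (M.B P ℓ).mulVec
            (fun j => (∑ d ∈ nbrs D P a, M.val D ℓ d j) / ((nbrs D P a).card : ℝ)) i)

/-- The dataset transformation induced by the GNN `M`:
`T_M(D) = { Uᵢ(a) : a ∈ con(D), v^a_L[i] ≥ t }`. -/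
def GNN.T (M : GNN δ Col) (D : Dataset δ Col) : Set (Fact δ Col) :=
  { f | ∃ (A : Fin δ) (a : ℕ), f = Fact.unary A a ∧ a ∈ conD D ∧
      M.t ≤ M.val D M.L a (Fin.cast M.dimsL.symm A) }

/-- A GNN is monotonic (is a MAGNN) if all matrix entries are non-negative. -/
def GNN.Monotonic (M : GNN δ Col) : Prop :=
  (∀ ℓ i j, 0 ≤ M.A ℓ i j) ∧ (∀ P ℓ i j, 0 ≤ M.B P ℓ i j)

/-- Concepts in the syntax `C ::= ⊤ | A | C ⊓ C' | C ⊔ C' | ≥ₙ P.C`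
(`∃P.C` is `≥₁ P.C`); ELUQ concepts are those in which every `≥ₙ` has `n ≥ 1`. -/
inductive Concept (δ : ℕ) (Col : Type) where
  | top : Concept δ Col
  | atom : Fin δ → Concept δ Col
  | and : Concept δ Col → Concept δ Col → Concept δ Col
  | or : Concept δ Col → Concept δ Col → Concept δ Col
  | atLeast : ℕ → Col → Concept δ Col → Concept δ Col
deriving DecidableEq

/-- A concept is a (well-formed) ELUQ concept when every `≥ₙ` has `n` a positive integer. -/
inductive ELUQ : Concept δ Col → Prop
  | top : ELUQ .top
  | atom (A : Fin δ) : ELUQ (.atom A)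
  | and {C₁ C₂} : ELUQ C₁ → ELUQ C₂ → ELUQ (.and C₁ C₂)
  | or {C₁ C₂} : ELUQ C₁ → ELUQ C₂ → ELUQ (.or C₁ C₂)
  | atLeast {C} (n : ℕ) (P : Col) (hn : 1 ≤ n) : ELUQ C → ELUQ (.atLeast n P C)

/-- Satisfaction of a concept by a constant over a dataset. -/
def sat (D : Dataset δ Col) : ℕ → Concept δ Col → Prop
  | _, .top => True
  | c, .atom A => Fact.unary A c ∈ D
  | c, .and C₁ C₂ => sat D c C₁ ∧ sat D c C₂
  | c, .or C₁ C₂ => sat D c C₁ ∨ sat D c C₂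
  | c, .atLeast n P C =>
      ∃ S : Finset ℕ, S.card = n ∧ ∀ d ∈ S, Fact.binary P c d ∈ D ∧ sat D d C

/-- A rule `C ⊑ A`. -/
structure Rule (δ : ℕ) (Col : Type) where
  body : Concept δ Col
  head : Fin δ
deriving DecidableEq

/-- Immediate consequences of a rule on a dataset. -/
def Rule.T (r : Rule δ Col) (D : Dataset δ Col) : Set (Fact δ Col) :=
  { f | ∃ a : ℕ, f = Fact.unary r.head a ∧ a ∈ conD D ∧ sat D a r.body }

/-- A rule is sound for a GNN if its consequences are always among the GNN's. -/
def Sound (r : Rule δ Col) (M : GNN δ Col) : Prop :=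
  ∀ D : Dataset δ Col, r.T D ⊆ M.T D


/-- Concepts of the family `Ω`-style language used for explanations:
`⊤`, unary atoms, conjunction, `∃ₙ P.(C₁,…,Cₙ)` ("exists `n` unique"), and
`≤ₘ P.⊤`. -/
inductive OConcept (δ : ℕ) (Col : Type) where
  | top : OConcept δ Col
  | atom : Fin δ → OConcept δ Col
  | and : OConcept δ Col → OConcept δ Col → OConcept δ Col
  | exUnique : Col → (n : ℕ) → (Fin n → OConcept δ Col) → OConcept δ Col
  | atMost : ℕ → Col → OConcept δ Col

variable {δ : ℕ} {Col : Type} [DecidableEq Col] [Fintype Col]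

/-- Satisfaction of the explanation concepts:
`(D,c) ⊨ ∃ₙ P.(C₁,…,Cₙ)` iff there are pairwise distinct `c₁,…,cₙ` with
`P(c,cᵢ) ∈ D` and `(D,cᵢ) ⊨ Cᵢ`; `(D,c) ⊨ ≤ₘ P.⊤` iff `c` has at most `m`
`P`-successors in `D`. -/
def osat (D : Dataset δ Col) : ℕ → OConcept δ Col → Prop
  | _, .top => True
  | c, .atom A => Fact.unary A c ∈ D
  | c, .and C₁ C₂ => osat D c C₁ ∧ osat D c C₂
  | c, .exUnique P n Cs => ∃ f : Fin n → ℕ, Function.Injective f ∧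
      ∀ i : Fin n, Fact.binary P c (f i) ∈ D ∧ osat D (f i) (Cs i)
  | c, .atMost m P => (nbrs D P c).card ≤ m

/-- Conjunction of a list of explanation concepts, beginning with `⊤`. -/
def bigAndO : List (OConcept δ Col) → OConcept δ Col
  | [] => .top
  | C :: rest => .and C (bigAndO rest)

/-- The list of atoms `A` with `A(c) ∈ D`. -/
noncomputable def atomsList (D : Dataset δ Col) (c : ℕ) : List (OConcept δ Col) :=
  ((Finset.univ : Finset (Fin δ)).filter fun A => Fact.unary A c ∈ D).toList.map
    OConcept.atom

/-- The explanation concept `C_ℓ^c` constructed from the dataset `D`: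
the conjunction of `⊤` and all atoms `A` with `A(c) ∈ D`, and, when `ℓ ≥ 1`,
additionally, for each binary predicate `P` whose set `{c₁,…,cₙ}` of
`P`-successors of `c` in `D` is non-empty, of
`∃ₙ P.(C_{ℓ-1}^{c₁},…,C_{ℓ-1}^{cₙ}) ⊓ ≤ₙ P.⊤`. -/
noncomputable def explConcept (D : Dataset δ Col) : ℕ → ℕ → OConcept δ Col
  | 0, c => bigAndO (atomsList D c)
  | ℓ + 1, c =>
      bigAndO (atomsList D c ++
        (Finset.univ : Finset Col).toList.filterMap fun P =>
          let l := (nbrs D P c).toList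
          if l.length = 0 then none
          else some (OConcept.and
            (OConcept.exUnique P l.length fun i => explConcept D ℓ (l.get i))
            (OConcept.atMost l.length P)))

/-- Immediate consequences on `D` of the rule `C ⊑ A` for an explanation concept `C`. -/
def OT (C : OConcept δ Col) (A : Fin δ) (D : Dataset δ Col) : Set (Fact δ Col) :=
  { f | ∃ a : ℕ, f = Fact.unary A a ∧ a ∈ conD D ∧ osat D a C }


-- ===== auxiliary lemmas =====

lemma mem_conD_right {D : Dataset δ Col} {P : Col} {a b : ℕ}
    (h : Fact.binary P a b ∈ D) : b ∈ conD D := by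
  refine Finset.mem_biUnion.mpr ⟨_, h, ?_⟩
  simp

lemma osat_bigAndO {D : Dataset δ Col} {c : ℕ} {l : List (OConcept δ Col)} :
    osat D c (bigAndO l) ↔ ∀ C ∈ l, osat D c C := by
  induction l with
  | nil => simp [bigAndO, osat]
  | cons C rest ih => simp [bigAndO, osat, ih]

lemma osat_atoms {Da D : Dataset δ Col} {x c : ℕ} :
    (∀ C ∈ atomsList Da x, osat D c C) ↔
      (∀ A : Fin δ, Fact.unary A x ∈ Da → Fact.unary A c ∈ D) := by
  simp [atomsList, osat]

lemma osat_explConcept_zero_iff {Da D : Dataset δ Col} {x c : ℕ} :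
    osat D c (explConcept Da 0 x) ↔
      ∀ A : Fin δ, Fact.unary A x ∈ Da → Fact.unary A c ∈ D := by
  rw [explConcept, osat_bigAndO]; exact osat_atoms

lemma osat_explConcept_succ_iff {Da D : Dataset δ Col} {ℓ x c : ℕ} :
    osat D c (explConcept Da (ℓ+1) x) ↔
      ((∀ A : Fin δ, Fact.unary A x ∈ Da → Fact.unary A c ∈ D) ∧
       ∀ P : Col, (nbrs Da P x).toList.length ≠ 0 →
         ((∃ f : Fin (nbrs Da P x).toList.length → ℕ, Function.Injective f ∧
            ∀ i, Fact.binary P c (f i) ∈ D ∧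
              osat D (f i) (explConcept Da ℓ ((nbrs Da P x).toList.get i))) ∧
          (nbrs D P c).card ≤ (nbrs Da P x).toList.length)) := by
  rw [explConcept, osat_bigAndO]
  constructor
  · intro h
    refine ⟨osat_atoms.mp (fun C hC => h C (List.mem_append_left _ hC)), ?_⟩
    intro P hP
    have hm : (OConcept.and
        (OConcept.exUnique P (nbrs Da P x).toList.length
          fun i => explConcept Da ℓ ((nbrs Da P x).toList.get i))
        (OConcept.atMost (nbrs Da P x).toList.length P)) ∈
        ((Finset.univ : Finset Col).toList.filterMap fun P =>
          let l := (nbrs Da P x).toList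
          if l.length = 0 then none
          else some (OConcept.and
            (OConcept.exUnique P l.length fun i => explConcept Da ℓ (l.get i))
            (OConcept.atMost l.length P))) := by
      refine List.mem_filterMap.mpr ⟨P, Finset.mem_toList.mpr (Finset.mem_univ P), ?_⟩
      show (if (nbrs Da P x).toList.length = 0 then none else _) = _
      rw [if_neg hP]
    have h2 := h _ (List.mem_append_right _ hm)
    obtain ⟨h2a, h2b⟩ := h2
    exact ⟨h2a, h2b⟩
  · rintro ⟨h1, h2⟩ C hC
    rcases List.mem_append.mp hC with h | h
    · exact osat_atoms.mpr h1 C h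
    · obtain ⟨P, -, hPC⟩ := List.mem_filterMap.mp h
      by_cases hP : (nbrs Da P x).toList.length = 0
      · rw [if_pos hP] at hPC
        exact absurd hPC (by simp)
      · rw [if_neg hP, Option.some.injEq] at hPC
        subst hPC
        obtain ⟨⟨f, hf, hfi⟩, hcard⟩ := h2 P hP
        exact ⟨⟨f, hf, hfi⟩, hcard⟩

lemma osat_descent {Da D : Dataset δ Col} :
    ∀ (ℓ x c : ℕ), osat D c (explConcept Da (ℓ+1) x) → osat D c (explConcept Da ℓ x)
  | 0, x, c, h => osat_explConcept_zero_iff.mpr (osat_explConcept_succ_iff.mp h).1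
  | ℓ+1, x, c, h => by
      obtain ⟨h1, h2⟩ := osat_explConcept_succ_iff.mp h
      refine osat_explConcept_succ_iff.mpr ⟨h1, fun P hP => ?_⟩
      obtain ⟨⟨f, hf, hfi⟩, hcard⟩ := h2 P hP
      exact ⟨⟨f, hf, fun i => ⟨(hfi i).1, osat_descent ℓ _ _ (hfi i).2⟩⟩, hcard⟩

lemma osat_self (Da : Dataset δ Col) : ∀ (ℓ c : ℕ), osat Da c (explConcept Da ℓ c)
  | 0, c => osat_explConcept_zero_iff.mpr fun _ h => h
  | ℓ+1, c => by
      refine osat_explConcept_succ_iff.mpr ⟨fun _ h => h, fun P _ => ?_⟩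
      refine ⟨⟨(nbrs Da P c).toList.get,
        List.nodup_iff_injective_get.mp (Finset.nodup_toList _), fun i => ?_⟩, ?_⟩
      · have hmem : (nbrs Da P c).toList.get i ∈ nbrs Da P c :=
          Finset.mem_toList.mp (List.get_mem _ i)
        exact ⟨(Finset.mem_filter.mp hmem).2, osat_self Da ℓ _⟩
      · simp [Finset.length_toList]

lemma val_nonneg (M : GNN δ Col) (D : Dataset δ Col) :
    ∀ (ℓ a : ℕ) (i : Fin (M.dims ℓ)), 0 ≤ M.val D ℓ a i
  | 0, a, i => by rw [GNN.val]; split <;> norm_num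
  | ℓ+1, a, i => by rw [GNN.val]; exact M.act_nonneg ℓ _

lemma nbrs_eq_image_get (D : Dataset δ Col) (P : Col) (a : ℕ) :
    nbrs D P a = Finset.image (nbrs D P a).toList.get Finset.univ := by
  refine (Finset.eq_of_subset_of_card_le (fun d hd => ?_) ?_).symm
  · obtain ⟨i, -, rfl⟩ := Finset.mem_image.mp hd
    exact Finset.mem_toList.mp (List.get_mem _ i)
  · rw [Finset.card_image_of_injective _
      (List.nodup_iff_injective_get.mp (Finset.nodup_toList _)),
      Finset.card_univ, Fintype.card_fin, Finset.length_toList]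

lemma val_mono (M : GNN δ Col) (hM : M.Monotonic) (Da : Dataset δ Col) :
    ∀ (ℓ a : ℕ) (D : Dataset δ Col) (c : ℕ),
      osat D c (explConcept Da ℓ a) → ∀ i, M.val Da ℓ a i ≤ M.val D ℓ c i
  | 0, a, D, c, h, i => by
      rw [GNN.val, GNN.val]
      split
      · rw [if_pos (osat_explConcept_zero_iff.mp h _ ‹_›)]
      · split <;> norm_num
  | ℓ+1, a, D, c, h, i => by
      have hIH : ∀ j, M.val Da ℓ a j ≤ M.val D ℓ c j :=
        val_mono M hM Da ℓ a D c (osat_descent ℓ a c h)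
      obtain ⟨h1, h2⟩ := osat_explConcept_succ_iff.mp h
      rw [GNN.val, GNN.val]
      apply M.act_mono
      refine add_le_add (add_le_add le_rfl ?_) ?_
      · simp only [Matrix.mulVec, dotProduct]
        exact Finset.sum_le_sum fun j _ =>
          mul_le_mul_of_nonneg_left (hIH j) (hM.1 ℓ i j)
      · refine Finset.sum_le_sum fun P _ => ?_
        simp only [Matrix.mulVec, dotProduct]
        refine Finset.sum_le_sum fun j _ =>
          mul_le_mul_of_nonneg_left ?_ (hM.2 P ℓ i j)
        beta_reduce
        by_cases hP : (nbrs Da P a).toList.length = 0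
        · have hempty : nbrs Da P a = ∅ := by
            rw [← Finset.toList_eq_nil, ← List.length_eq_zero_iff]; exact hP
          rw [hempty]
          simp only [Finset.sum_empty, Finset.card_empty, Nat.cast_zero, zero_div]
          exact div_nonneg (Finset.sum_nonneg fun d _ => val_nonneg M D ℓ d j)
            (Nat.cast_nonneg _)
        · obtain ⟨⟨f, hf, hfi⟩, hcard⟩ := h2 P hP
          have himg : Finset.image f Finset.univ ⊆ nbrs D P c := by
            intro d hd
            obtain ⟨i', -, rfl⟩ := Finset.mem_image.mp hd
            exact Finset.mem_filter.mpr ⟨mem_conD_right (hfi i').1, (hfi i').1⟩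
          have hcardimg : (Finset.image f Finset.univ).card =
              (nbrs Da P a).toList.length := by
            rw [Finset.card_image_of_injective _ hf, Finset.card_univ, Fintype.card_fin]
          have heq : Finset.image f Finset.univ = nbrs D P c :=
            Finset.eq_of_subset_of_card_le himg (hcard.trans_eq hcardimg.symm)
          have hcardD : (nbrs D P c).card = (nbrs Da P a).toList.length := by
            rw [← heq, hcardimg]
          have hcardDa : (nbrs Da P a).card = (nbrs Da P a).toList.length :=
            (Finset.length_toList _).symm
          have hsum1 : ∑ d ∈ nbrs Da P a, M.val Da ℓ d j =
              ∑ i' : Fin (nbrs Da P a).toList.length,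
                M.val Da ℓ ((nbrs Da P a).toList.get i') j := by
            conv_lhs => rw [nbrs_eq_image_get Da P a]
            exact Finset.sum_image fun x _ y _ hxy =>
              List.nodup_iff_injective_get.mp (Finset.nodup_toList _) hxy
          have hsum2 : ∑ d ∈ nbrs D P c, M.val D ℓ d j =
              ∑ i' : Fin (nbrs Da P a).toList.length, M.val D ℓ (f i') j := by
            rw [← heq]
            exact Finset.sum_image fun x _ y _ hxy => hf hxy
          rw [hsum1, hsum2, hcardD, hcardDa]
          have hn : (0:ℝ) < ((nbrs Da P a).toList.length : ℝ) := by
            exact_mod_cast Nat.pos_of_ne_zero hP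
          gcongr with i' hi'
          exact val_mono M hM Da ℓ _ D _ (hfi i').2 j

/-- For a MAGNN `M` with `L` layers, a dataset `D_a`, and a
predicted fact `A(a) ∈ T_M(D_a)`, the rule `r : C_L^a ⊑ A` (with `C_L^a`
constructed from `D_a`) is sound for `M`, and `A(a) ∈ T_r(D_a)`. -/
theorem explanation_sound (M : GNN δ Col) (hM : M.Monotonic)
    (Da : Dataset δ Col) (a : ℕ) (A : Fin δ)
    (hpred : Fact.unary A a ∈ M.T Da) :
    (∀ D : Dataset δ Col, OT (explConcept Da M.L a) A D ⊆ M.T D) ∧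
    Fact.unary A a ∈ OT (explConcept Da M.L a) A Da := by
  obtain ⟨A', a', heq, ha, hval⟩ := hpred
  obtain ⟨rfl, rfl⟩ := Fact.unary.inj heq
  constructor
  · intro D f hf
    obtain ⟨c, rfl, hc, hsat⟩ := hf
    exact ⟨A, c, rfl, hc, le_trans hval (val_mono M hM Da M.L a D c hsat _)⟩
  · exact ⟨a, rfl, ha, osat_self Da M.L a⟩

end KG
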